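/- Let (X,d,m) be a parabolic RCD(0,N) space and C ⊂ X × (0,+∞) a nonempty set which is locally the boundary of a locally perimeter minimizing set in X × ℝ. Let d_C be the distance from C, d_0 the signed distance from X × {0} (positive on X × (−∞,0)), and d̄ := d_C − d_0 on X × (−∞,0). If d̄ is not constant, then there exist a metric ball B ⊂ X × (−∞,0) and τ > 0 such that the minimal relaxed gradient satisfies |∇d̄|(x̄) ≥ τ for m_×-a.e. x̄ ∈ B. -/

import Mathlib

/-!
Common framework: metric measure spaces, relaxed gradients, BV/perimeter,
Cheeger energy, Sobolev spaces, Laplacians, heat kernels, parabolicity,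
a synthetic `RCD(K,N)` predicate, Green's functions, and the `L²` product
`X ×₂ ℝ` used for half-space statements.
-/

open MeasureTheory Filter Topology Set Metric
open scoped ENNReal NNReal

noncomputable section

namespace HalfSpaceRCD

variable {X : Type*}

/-- Pointwise (upper) Lipschitz constant `lip f x` of a real valued function. -/
def lipConst [PseudoMetricSpace X] (f : X → ℝ) (x : X) : ℝ≥0∞ :=
  Filter.limsup (fun y => ENNReal.ofReal (|f x - f y| / dist x y)) (𝓝[≠] x)

/-- A function is locally Lipschitz on a set `A`. -/
def LocLipOn [PseudoMetricSpace X] (f : X → ℝ) (A : Set X) : Prop :=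
  ∀ x ∈ A, ∃ ε : ℝ, 0 < ε ∧ ∃ K : ℝ≥0, LipschitzOnWith K f (Metric.ball x ε ∩ A)

/-- Lipschitz functions with compact support contained in `A`
(the class `Lip_c(A)`). -/
def LipCompactIn [PseudoMetricSpace X] (f : X → ℝ) (A : Set X) : Prop :=
  (∃ K : ℝ≥0, LipschitzWith K f) ∧ HasCompactSupport f ∧ tsupport f ⊆ A

variable [MetricSpace X] [MeasurableSpace X]

/-- Relaxed total variation `|Df|(A)` of `f : X → ℝ` on a set `A`, obtained by
relaxation of `∫_A lip g dμ` along locally Lipschitz approximations `g → f` in `L¹(A)`. -/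
def variationOn (μ : Measure X) (f : X → ℝ) (A : Set X) : ℝ≥0∞ :=
  sInf { v : ℝ≥0∞ | ∃ g : ℕ → X → ℝ, (∀ n, LocLipOn (g n) A) ∧
    Tendsto (fun n => ∫⁻ x in A, ENNReal.ofReal |g n x - f x| ∂μ) atTop (𝓝 0) ∧
    v = Filter.liminf (fun n => ∫⁻ x in A, lipConst (g n) x ∂μ) atTop }

/-- Relaxed `2`-Cheeger energy of `f` on a set `A`. -/
def cheegerOn (μ : Measure X) (f : X → ℝ) (A : Set X) : ℝ≥0∞ :=
  sInf { v : ℝ≥0∞ | ∃ g : ℕ → X → ℝ, (∀ n, LocLipOn (g n) A) ∧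
    Tendsto (fun n => ∫⁻ x in A, (ENNReal.ofReal |g n x - f x|) ^ 2 ∂μ) atTop (𝓝 0) ∧
    v = Filter.liminf (fun n => ∫⁻ x in A, (lipConst (g n) x) ^ 2 ∂μ) atTop }

/-- Membership in the Sobolev space `W^{1,2}(A)`. -/
def MemW12 (μ : Measure X) (f : X → ℝ) (A : Set X) : Prop :=
  MemLp f 2 (μ.restrict A) ∧ cheegerOn μ f A < ⊤

/-- Membership in `W^{1,2}_0(A)`: approximable by `Lip_c(A)` functions in energy. -/
def MemW120 (μ : Measure X) (f : X → ℝ) (A : Set X) : Prop :=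
  MemW12 μ f A ∧ ∃ g : ℕ → X → ℝ, (∀ n, LipCompactIn (g n) A) ∧
    Tendsto (fun n => ∫⁻ x in A, (ENNReal.ofReal |g n x - f x|) ^ 2 ∂μ) atTop (𝓝 0) ∧
    Tendsto (fun n => cheegerOn μ (fun x => g n x - f x) A) atTop (𝓝 0)

/-- Membership in `W^{1,1}(A)`: integrable, of bounded variation, and the variation
measure is absolutely continuous w.r.t. `μ` (it has an integrable density). -/
def MemW11 (μ : Measure X) (f : X → ℝ) (A : Set X) : Prop :=
  IntegrableOn f A μ ∧ ∃ G : X → ℝ, (∀ x, 0 ≤ G x) ∧ IntegrableOn G A μ ∧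
    ∀ U : Set X, U ⊆ A → IsOpen U → variationOn μ f U = ∫⁻ x in U, ENNReal.ofReal (G x) ∂μ

/-- Membership in `W^{1,1}_0(A)`. -/
def MemW110 (μ : Measure X) (f : X → ℝ) (A : Set X) : Prop :=
  MemW11 μ f A ∧ ∃ g : ℕ → X → ℝ, (∀ n, LipCompactIn (g n) A) ∧
    Tendsto (fun n => ∫⁻ x in A, ENNReal.ofReal |g n x - f x| ∂μ) atTop (𝓝 0) ∧
    Tendsto (fun n => variationOn μ (fun x => g n x - f x) A) atTop (𝓝 0)

/-- Membership in `W^{1,1}_loc(X)`. -/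
def MemW11Loc (μ : Measure X) (f : X → ℝ) : Prop :=
  ∀ (x : X) (r : ℝ), 0 < r → MemW11 μ f (Metric.ball x r)

/-- The pointwise pairing `∇f ⋅ ∇g` defined by polarization of slopes. -/
def gradPairing (f g : X → ℝ) (x : X) : ℝ :=
  ((lipConst (fun y => f y + g y) x).toReal ^ 2
    - (lipConst (fun y => f y - g y) x).toReal ^ 2) / 4

/-- `f ∈ D(Δ, B)` with `Δ f = h` on `B`. -/
def HasLaplacianOn (μ : Measure X) (f h : X → ℝ) (B : Set X) : Prop :=
  MemW12 μ f B ∧ MemLp h 2 (μ.restrict B) ∧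
    ∀ g : X → ℝ, MemW120 μ g B →
      ∫ y in B, g y * h y ∂μ = -∫ y in B, gradPairing g f y ∂μ

/-! ## The synthetic `RCD(K,N)` condition -/

/-- The coefficient `s_{K,N}(t)` of the model space. -/
def modelCoeff (K N t : ℝ) : ℝ :=
  if 0 < K then Real.sqrt ((N - 1) / K) * Real.sin (t * Real.sqrt (K / (N - 1)))
  else if K = 0 then t
  else Real.sqrt ((N - 1) / (-K)) * Real.sinh (t * Real.sqrt ((-K) / (N - 1)))

/-- The model volume `V_{K,N}(r)` (up to the constant `N ω_N`). -/
def modelVolume (K N r : ℝ) : ℝ := ∫ t in (0:ℝ)..r, modelCoeff K N t ^ (N - 1)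

/-- Synthetic encoding of the `RCD(K,N)` condition on a metric measure space:
a complete, proper, geodesic metric measure space with measure finite on bounded
sets and of full support, which is infinitesimally Hilbertian (the `2`-Cheeger
energy satisfies the parallelogram identity) and satisfies the sharp
Bishop–Gromov volume comparison of the curvature-dimension condition `CD(K,N)`. -/
structure IsRCD (K N : ℝ) {X : Type*} [MetricSpace X] [MeasurableSpace X]
    (μ : Measure X) : Prop where
  one_le_dim : 1 ≤ N
  complete : CompleteSpace X
  proper : ProperSpace X
  geodesic : ∀ x y : X, ∃ z : X, dist x z = dist x y / 2 ∧ dist z y = dist x y / 2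
  finiteOnBounded : ∀ (x : X) (r : ℝ), μ (Metric.ball x r) < ⊤
  fullSupport : ∀ (x : X) (r : ℝ), 0 < r → 0 < μ (Metric.ball x r)
  infHilbertian : ∀ f g : X → ℝ, MemLp f 2 μ → MemLp g 2 μ →
    cheegerOn μ (fun x => f x + g x) Set.univ + cheegerOn μ (fun x => f x - g x) Set.univ
      = 2 * cheegerOn μ f Set.univ + 2 * cheegerOn μ g Set.univ
  bishopGromov : ∀ (x : X) (r R : ℝ), 0 < r → r ≤ R →
    μ (Metric.ball x R) * ENNReal.ofReal (modelVolume K N r)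
      ≤ μ (Metric.ball x r) * ENNReal.ofReal (modelVolume K N R)

/-! ## Heat kernel and parabolicity -/

/-- `p` is the heat kernel of the metric measure space `(X, d, μ)`: a symmetric,
measurable, stochastically complete kernel satisfying the Chapman–Kolmogorov
identity, whose associated semigroup `P_t f(x) = ∫ p_t(x,y) f(y) dμ(y)` is the
`L²`-gradient flow of the Cheeger energy. -/
structure IsHeatKernel {X : Type*} [MetricSpace X] [MeasurableSpace X] (μ : Measure X)
    (p : ℝ → X → X → ℝ) : Prop where
  nonneg : ∀ t x y, 0 < t → 0 ≤ p t x y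
  symm : ∀ t x y, p t x y = p t y x
  meas : ∀ t : ℝ, Measurable fun q : X × X => p t q.1 q.2
  timeCont : ∀ x y, ContinuousOn (fun t => p t x y) (Set.Ioi (0:ℝ))
  chapman : ∀ s t : ℝ, 0 < s → 0 < t → ∀ x y, p (s + t) x y = ∫ z, p s x z * p t z y ∂μ
  stochasticallyComplete : ∀ t : ℝ, 0 < t → ∀ x, ∫ y, p t x y ∂μ = 1
  l2Approx : ∀ f : X → ℝ, LipCompactIn f Set.univ →
    Tendsto (fun t : ℝ => ∫ x, ((∫ y, p t x y * f y ∂μ) - f x) ^ 2 ∂μ) (𝓝[>] (0:ℝ)) (𝓝 0)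
  gradientFlow : ∀ f g : X → ℝ, LipCompactIn f Set.univ → LipCompactIn g Set.univ →
    ∀ t : ℝ, 0 < t →
      HasDerivAt (fun s : ℝ => ∫ x, (∫ y, p s x y * f y ∂μ) * g x ∂μ)
        (-(((cheegerOn μ (fun x => (∫ y, p t x y * f y ∂μ) + g x) Set.univ).toReal -
            (cheegerOn μ (fun x => (∫ y, p t x y * f y ∂μ) - g x) Set.univ).toReal) / 4)) t

/-- A metric measure space with heat kernel `p` is parabolic if
`∫_1^∞ p_t(x,y) dt = +∞` for every pair of points. -/
def Parabolic {X : Type*} [MetricSpace X] [MeasurableSpace X] (μ : Measure X)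
    (p : ℝ → X → X → ℝ) : Prop :=
  ∀ x y : X, ∫⁻ t in Set.Ioi (1:ℝ), ENNReal.ofReal (p t x y) = ⊤

/-! ## Sets of finite perimeter and minimizers -/

/-- Perimeter of `E` relative to `A`, i.e. the total variation of `1_E` on `A`. -/
def perimeter (μ : Measure X) (E A : Set X) : ℝ≥0∞ :=
  variationOn μ (Set.indicator E fun _ => (1:ℝ)) A

/-- `s` is compactly contained in `t` (`s ⋐ t`). -/
def CompactlyContained [TopologicalSpace X] (s t : Set X) : Prop :=
  IsCompact (closure s) ∧ closure s ⊆ t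

/-- The symmetric difference of two sets. -/
def symmDiffSet (E F : Set X) : Set X := (E \ F) ∪ (F \ E)

/-- `E` is perimeter minimizing in the open set `Ω`. -/
def PerimMinimizingIn (μ : Measure X) (E Ω : Set X) : Prop :=
  E ⊆ Ω ∧ (∀ x ∈ Ω, ∀ r : ℝ, 0 < r → perimeter μ E (Metric.ball x r ∩ Ω) < ⊤) ∧
    ∀ x ∈ Ω, ∀ r : ℝ, 0 < r → ∀ F : Set X, F ⊆ Ω →
      CompactlyContained (symmDiffSet F E) (Metric.ball x r ∩ Ω) →
      perimeter μ E (Metric.ball x r ∩ Ω) ≤ perimeter μ F (Metric.ball x r ∩ Ω)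

/-- `E` is (globally) perimeter minimizing. -/
def PerimMinimizing (μ : Measure X) (E : Set X) : Prop :=
  PerimMinimizingIn μ E Set.univ

/-- `E` is locally perimeter minimizing in the open set `Ω`. -/
def LocPerimMinimizingIn (μ : Measure X) (E Ω : Set X) : Prop :=
  E ⊆ Ω ∧ (∀ x ∈ Ω, ∀ r : ℝ, 0 < r → perimeter μ E (Metric.ball x r ∩ Ω) < ⊤) ∧
    ∀ x ∈ Ω, ∃ r : ℝ, 0 < r ∧ ∀ F : Set X, F ⊆ Ω →
      CompactlyContained (symmDiffSet F E) (Metric.ball x r ∩ Ω) →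
      perimeter μ E (Metric.ball x r ∩ Ω) ≤ perimeter μ F (Metric.ball x r ∩ Ω)

/-- `C` is locally the boundary of a locally perimeter minimizing set: every point has
an open neighbourhood `U` and a set `E ⊆ U` (open representative) locally minimizing
the perimeter in `U` with `C ∩ U = ∂E ∩ U`. -/
def IsLocalMinimizingBoundary (μ : Measure X) (C : Set X) : Prop :=
  ∀ x : X, ∃ U : Set X, IsOpen U ∧ x ∈ U ∧ ∃ E : Set X, E ⊆ U ∧ IsOpen E ∧
    LocPerimMinimizingIn μ E U ∧ C ∩ U = frontier E ∩ U

/-- `S` is an area minimizing boundary in the open set `A`. -/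
def IsAreaMinBoundary (μ : Measure X) (S A : Set X) : Prop :=
  ∃ E : Set X, E ⊆ A ∧ PerimMinimizingIn μ E A ∧ frontier E ∩ A = S

/-! ## Regular sets and Green's functions -/

/-- An open precompact set `B` with `closure B ≠ X` is regular if the Dirichlet
problem for harmonic functions with continuous boundary data is solvable on `B`. -/
def IsRegularSet (μ : Measure X) (B : Set X) : Prop :=
  IsOpen B ∧ IsCompact (closure B) ∧ closure B ≠ Set.univ ∧
    ∀ f : X → ℝ, MemW12 μ f B → ContinuousOn f (frontier B) →
      ∃ u : X → ℝ, HasLaplacianOn μ u (fun _ => 0) B ∧ ContinuousOn u (closure B) ∧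
        MemW120 μ (fun y => u y - f y) B ∧ Set.EqOn u f (frontier B)

/-- An exhaustion of `X` by regular sets. -/
def IsRegularExhaustion (μ : Measure X) (B : ℕ → Set X) : Prop :=
  (∀ i, IsRegularSet μ (B i)) ∧ (∀ i, CompactlyContained (B i) (B (i + 1))) ∧
    (⋃ i, B i) = Set.univ

/-- `G` is a Green's function on the regular set `B` with pole `x`:
`G ∈ W^{1,1}_0(B) ∩ C(closure B \ {x})`, `Δ G = -δ_x` in the distributional sense in
`B`, and `G = 0` on `∂B`. -/
structure IsGreenOn (μ : Measure X) (B : Set X) (x : X) (G : X → ℝ) : Prop where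
  mem : MemW110 μ G B
  cont : ContinuousOn G (closure B \ {x})
  deltaEq : ∀ g : X → ℝ, LipCompactIn g B → ∫ z in B, gradPairing g G z ∂μ = g x
  bdry : Set.EqOn G 0 (frontier B)

/-- `G` is a Green's function on `X` with pole `x`:
`G ∈ W^{1,1}_loc(X) ∩ C(X \ {x})` and `Δ G = -δ_x` in the distributional sense. -/
structure IsGreenGlobal (μ : Measure X) (x : X) (G : X → ℝ) : Prop where
  mem : MemW11Loc μ G
  cont : ContinuousOn G {x}ᶜ
  deltaEq : ∀ g : X → ℝ, LipCompactIn g Set.univ → ∫ z, gradPairing g G z ∂μ = g x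

/-! ## The `L²` product of two metric measure spaces -/

instance l2ProdMeasurableSpace {α β : Type*} [MeasurableSpace α] [MeasurableSpace β] :
    MeasurableSpace (WithLp 2 (α × β)) :=
  MeasurableSpace.comap WithLp.ofLp (inferInstanceAs (MeasurableSpace (α × β)))

/-- The product measure on the `L²` product. -/
def l2prodMeasure {α β : Type*} [MeasurableSpace α] [MeasurableSpace β]
    (μ : Measure α) (ν : Measure β) : Measure (WithLp 2 (α × β)) :=
  Measure.map (WithLp.toLp 2) (μ.prod ν : Measure (α × β))

/-- First coordinate of a point of the `L²` product. -/
def fst2 {α β : Type*} (q : WithLp 2 (α × β)) : α := (WithLp.equiv 2 (α × β) q).1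

/-- Second coordinate of a point of the `L²` product. -/
def snd2 {α β : Type*} (q : WithLp 2 (α × β)) : β := (WithLp.equiv 2 (α × β) q).2

/-- The point `(a, b)` of the `L²` product. -/
def mk2 {α β : Type*} (a : α) (b : β) : WithLp 2 (α × β) :=
  (WithLp.equiv 2 (α × β)).symm (a, b)

instance l2ProdBorelSpace {α β : Type*} [MetricSpace α] [MetricSpace β]
    [MeasurableSpace α] [MeasurableSpace β] [BorelSpace α] [BorelSpace β]
    [SecondCountableTopology α] [SecondCountableTopology β] :
    BorelSpace (WithLp 2 (α × β)) :=
  ⟨(WithLp.borelSpace 2 α β).measurable_eq⟩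

/-! ## Weighted Riemannian manifolds, minimality, moduli of parabolicity -/

/-- Weighted area functional: the `d`-dimensional Hausdorff measure weighted by `w`. -/
def wArea {P : Type*} [MetricSpace P] [MeasurableSpace P] [BorelSpace P]
    (d : ℝ) (w : P → ℝ) (A : Set P) : ℝ≥0∞ :=
  ∫⁻ x in A, ENNReal.ofReal (w x) ∂(μH[d])

/-- Synthetic encoding of an `n`-dimensional weighted Riemannian manifold
`(M, d_g, e^{-V} m_g)` with boundary `Bd`: the measure is the `n`-dimensional
Hausdorff measure with the continuous weight `e^{-V}`, the distance is geodesic,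
and around any point the space is `(1+δ)`-bi-Lipschitz to a subset of `ℝⁿ`
at every scale `δ`. -/
structure IsWeightedManifoldMM (n : ℕ) (M : Type*) [MetricSpace M] [MeasurableSpace M]
    [BorelSpace M] (ν : Measure M) (V : M → ℝ) (Bd : Set M) : Prop where
  weightCont : Continuous V
  measure_eq : ν = (μH[(n : ℝ)] : Measure M).withDensity fun x => ENNReal.ofReal (Real.exp (-V x))
  bd_closed : IsClosed Bd
  geodesic : ∀ x y : M, ∃ z : M, dist x z = dist x y / 2 ∧ dist z y = dist x y / 2
  charts : ∀ x : M, ∀ δ : ℝ, 0 < δ → ∃ ε : ℝ, 0 < ε ∧ ∃ f : M → EuclideanSpace ℝ (Fin n),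
    (∀ y ∈ Metric.ball x ε, ∀ z ∈ Metric.ball x ε,
      dist y z / (1 + δ) ≤ dist (f y) (f z) ∧ dist (f y) (f z) ≤ (1 + δ) * dist y z) ∧
    (x ∉ Bd → Metric.ball x ε ∩ Bd = ∅)

/-- A hypersurface `S` is minimal with free boundary on `Bd` (equivalently, it is a
critical point of the `d`-dimensional weighted area functional with weight `w`
among deformations preserving `Bd`): for every compactly supported bi-Lipschitz
deformation family `Φ_t` with `Φ_0 = id` preserving `Bd`, the weighted area of
`Φ_t '' S` has vanishing derivative at `t = 0`. -/
def IsMinimalFreeBoundary {P : Type*} [MetricSpace P] [MeasurableSpace P] [BorelSpace P]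
    (d : ℝ) (w : P → ℝ) (Bd : Set P) (S : Set P) : Prop :=
  ∀ (Φ : ℝ → P → P) (Kc : Set P), IsCompact Kc →
    Φ 0 = id →
    (∀ (t : ℝ) (y : P), y ∉ Kc → Φ t y = y) →
    (∀ t : ℝ, Function.Bijective (Φ t)) →
    (∃ L : ℝ≥0, ∀ t ∈ Set.Icc (-1:ℝ) 1, LipschitzWith L (Φ t)) →
    (∃ L : ℝ≥0, ∀ y : P, LipschitzWith L fun t => Φ t y) →
    (∀ t : ℝ, Φ t '' Bd ⊆ Bd) →
    deriv (fun t : ℝ => (wArea d w (Φ t '' S ∩ Kc)).toReal) 0 = 0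

/-- `P` is a modulus of parabolicity. -/
def ModulusOfParabolicity (P : ℝ → ℝ) : Prop :=
  (∀ t : ℝ, 0 ≤ t → 0 < P t) ∧ ∫⁻ t in Set.Ioi (1:ℝ), ENNReal.ofReal (t / P t) = ⊤

/-- The oscillation `Osc_{x,r}(S)` of a set `S ⊆ M ×₂ ℝ` through `(x,0)`. -/
def Osc {M : Type*} [MetricSpace M] (x : M) (r : ℝ) (S : Set (WithLp 2 (M × ℝ))) : ℝ :=
  sSup { a : ℝ | ∃ q ∈ S, fst2 q ∈ Metric.ball x r ∧ snd2 q ∈ Set.Ioo (-r) r ∧ a = |snd2 q| }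

/-- Upper oscillation `Osc⁺_{x,r}(S)`. -/
def OscPlus {M : Type*} [MetricSpace M] (x : M) (r : ℝ) (S : Set (WithLp 2 (M × ℝ))) : ℝ :=
  sSup { a : ℝ | ∃ q ∈ S, fst2 q ∈ Metric.ball x r ∧ snd2 q ∈ Set.Ioo 0 r ∧ a = |snd2 q| }

/-!
Write `d̄ = d_C + s` on the lower half-space. If below the hyperplane the point straight above
every `q` at height `d_C(q)` lies on `closure C`, then `d̄` is constant on vertical lines and
its horizontal oscillation at depth `s` is `O(1 / |s|)`, so `d̄` is constant. Otherwise some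
`q₀` has its vertical foot at positive distance from `C`; near `q₀` every almost-nearest point
of `C` then sits at horizontal distance at least some `κ > 0`, so that moving up by `t`
decreases `d_C` by at most `(1 - κ² / (2R²)) t`. Hence `d̄` grows at rate at least
`κ² / (2R²)` along upward vertical segments, which bounds its slope from below on a ball.
-/

lemma sqrt_sq_add_sq_le_add_div {d D : ℝ} (hD : 0 < D) :
    √(d ^ 2 + D ^ 2) ≤ D + d ^ 2 / (2 * D) := by
  rw [Real.sqrt_le_left (by positivity)]
  have : (D + d ^ 2 / (2 * D)) ^ 2 = d ^ 2 + D ^ 2 + (d ^ 2 / (2 * D)) ^ 2 := by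
    field_simp
    ring
  nlinarith [sq_nonneg (d ^ 2 / (2 * D))]

lemma sqrt_sq_add_sq_sub_le {a b t : ℝ} (ht : 0 ≤ t) (hab : 0 < a ^ 2 + b ^ 2) :
    √(a ^ 2 + b ^ 2) - t + t * a ^ 2 / (2 * (a ^ 2 + b ^ 2)) ≤ √(a ^ 2 + (b + t) ^ 2) := by
  set r := √(a ^ 2 + b ^ 2)
  have hr : 0 < r := Real.sqrt_pos.2 hab
  have hrr : r ^ 2 = a ^ 2 + b ^ 2 := Real.sq_sqrt hab.le
  -- the tangent line at `t = 0` of the convex function `t ↦ √(a² + (b + t)²)`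
  have tangent : r + t * b / r ≤ √(a ^ 2 + (b + t) ^ 2) := by
    refine (le_abs_self _).trans (Real.abs_le_sqrt ?_)
    have hb : b ^ 2 / r ^ 2 ≤ 1 := (div_le_one (by positivity)).2 (by nlinarith)
    have : (r + t * b / r) ^ 2 = r ^ 2 + 2 * t * b + t ^ 2 * (b ^ 2 / r ^ 2) := by
      field_simp
      ring
    nlinarith [mul_le_mul_of_nonneg_left hb (sq_nonneg t)]
  -- the slope `b / r` of the tangent is at least `a² / (2 r²) - 1`, by AM-GM
  have slope : -t + t * a ^ 2 / (2 * r ^ 2) ≤ t * b / r := by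
    have : t * b / r - (-t + t * a ^ 2 / (2 * r ^ 2)) = t * (r + b) ^ 2 / (2 * r ^ 2) := by
      field_simp
      linear_combination t * hrr
    have : 0 ≤ t * (r + b) ^ 2 / (2 * r ^ 2) := by positivity
    linarith
  rw [← hrr]
  linarith

section ProductGeometry

variable {X : Type*}

@[simp] lemma fst2_mk2 (x : X) (s : ℝ) : fst2 (mk2 x s) = x := rfl

@[simp] lemma snd2_mk2 (x : X) (s : ℝ) : snd2 (mk2 x s) = s := rfl

@[simp] lemma mk2_fst2_snd2 (q : WithLp 2 (X × ℝ)) : mk2 (fst2 q) (snd2 q) = q := rfl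

variable [MetricSpace X]

lemma dist_eq_sqrt_fst2_snd2 (q q' : WithLp 2 (X × ℝ)) :
    dist q q' = √(dist (fst2 q) (fst2 q') ^ 2 + (snd2 q - snd2 q') ^ 2) := by
  rw [WithLp.prod_dist_eq_add (by norm_num), Real.sqrt_eq_rpow, Real.dist_eq]
  norm_num
  rfl

lemma dist_sq_eq_fst2_snd2 (q q' : WithLp 2 (X × ℝ)) :
    dist q q' ^ 2 = dist (fst2 q) (fst2 q') ^ 2 + (snd2 q - snd2 q') ^ 2 := by
  rw [dist_eq_sqrt_fst2_snd2, Real.sq_sqrt (by positivity)]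

lemma dist_fst2_le_dist (q q' : WithLp 2 (X × ℝ)) : dist (fst2 q) (fst2 q') ≤ dist q q' :=
  WithLp.dist_fst_le q q'

lemma abs_snd2_sub_le_dist (q q' : WithLp 2 (X × ℝ)) : |snd2 q - snd2 q'| ≤ dist q q' :=
  WithLp.dist_snd_le q q'

lemma dist_le_dist_fst2_add_abs_snd2 (q q' : WithLp 2 (X × ℝ)) :
    dist q q' ≤ dist (fst2 q) (fst2 q') + |snd2 q - snd2 q'| := by
  rw [dist_eq_sqrt_fst2_snd2, Real.sqrt_le_left (by positivity), ← sq_abs (snd2 q - snd2 q')]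
  nlinarith [dist_nonneg (x := fst2 q) (y := fst2 q'), abs_nonneg (snd2 q - snd2 q')]

lemma dist_mk2_mk2_same_fst (x : X) (s t : ℝ) : dist (mk2 x s) (mk2 x t) = |s - t| := by
  rw [dist_eq_sqrt_fst2_snd2]
  simp [Real.sqrt_sq_eq_abs]

lemma dist_mk2_add_self (q : WithLp 2 (X × ℝ)) (t : ℝ) :
    dist (mk2 (fst2 q) (snd2 q + t)) q = |t| := by
  simpa using dist_mk2_mk2_same_fst (fst2 q) (snd2 q + t) (snd2 q)

lemma dist_mk2_add_mk2_add (x y : X) (s t r : ℝ) :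
    dist (mk2 x (s + r)) (mk2 y (t + r)) = dist (mk2 x s) (mk2 y t) := by
  simp only [dist_eq_sqrt_fst2_snd2, fst2_mk2, snd2_mk2, add_sub_add_right_eq_sub]

end ProductGeometry

section DistanceToSet

variable {X : Type*} [MetricSpace X] {C : Set (WithLp 2 (X × ℝ))}

lemma neg_snd2_le_infDist (hne : C.Nonempty) (hsub : C ⊆ {q | 0 ≤ snd2 q})
    (q : WithLp 2 (X × ℝ)) : -snd2 q ≤ infDist q C :=
  (le_infDist hne).2 fun c hc => by
    have := abs_snd2_sub_le_dist q c
    have : 0 ≤ snd2 c := hsub hc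
    linarith [neg_abs_le (snd2 q - snd2 c)]

lemma infDist_mk2_add_le_of_mem_closure {x : X} {s s' : ℝ}
    (h : mk2 x (s + infDist (mk2 x s) C) ∈ closure C) (hs' : s' ≤ s + infDist (mk2 x s) C) :
    infDist (mk2 x s') C + s' ≤ infDist (mk2 x s) C + s := by
  have := infDist_le_dist_of_mem (x := mk2 x s') h
  rw [infDist_closure, dist_mk2_mk2_same_fst, abs_of_nonpos (by linarith)] at this
  linarith

lemma infDist_mk2_le_add_sq_div_of_mem_closure (x : X) {y : X} {s : ℝ}
    (hD : 0 < infDist (mk2 y s) C) (h : mk2 y (s + infDist (mk2 y s) C) ∈ closure C) :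
    infDist (mk2 x s) C ≤ infDist (mk2 y s) C + dist x y ^ 2 / (2 * infDist (mk2 y s) C) := by
  calc infDist (mk2 x s) C ≤ dist (mk2 x s) (mk2 y (s + infDist (mk2 y s) C)) := by
        rw [← infDist_closure]
        exact infDist_le_dist_of_mem h
    _ = √(dist x y ^ 2 + infDist (mk2 y s) C ^ 2) := by
        rw [dist_eq_sqrt_fst2_snd2]
        simp
    _ ≤ _ := sqrt_sq_add_sq_le_add_div hD

lemma exists_infDist_add_snd2_eq_of_forall_mem_closure (hne : C.Nonempty)
    (hsub : C ⊆ {q | 0 ≤ snd2 q})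
    (hV : ∀ q, snd2 q < 0 → mk2 (fst2 q) (snd2 q + infDist q C) ∈ closure C) :
    ∃ c : ℝ, ∀ q, snd2 q < 0 → infDist q C + snd2 q = c := by
  set F : X → ℝ → ℝ := fun x s => infDist (mk2 x s) C + s
  have hD (x : X) (s : ℝ) : -s ≤ infDist (mk2 x s) C := neg_snd2_le_infDist hne hsub (mk2 x s)
  have vertical (x : X) {s t : ℝ} (hs : s < 0) (ht : t < 0) : F x t ≤ F x s :=
    infDist_mk2_add_le_of_mem_closure (hV (mk2 x s) hs) (by linarith [hD x s])
  have horizontal (x y : X) {s : ℝ} (hs : s < 0) : F x s ≤ F y s + dist x y ^ 2 / (2 * -s) := by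
    have hDy : 0 < infDist (mk2 y s) C := by linarith [hD y s]
    have := infDist_mk2_le_add_sq_div_of_mem_closure x hDy (hV (mk2 y s) hs)
    have : dist x y ^ 2 / (2 * infDist (mk2 y s) C) ≤ dist x y ^ 2 / (2 * -s) := by
      gcongr
      · linarith
      · exact hD y s
    simp only [F]
    linarith
  have hle (x y : X) : F x (-1) ≤ F y (-1) := by
    have hlim :
        Tendsto (fun s : ℝ => F y (-1) + dist x y ^ 2 / (2 * -s)) atBot (𝓝 (F y (-1))) := by
      simpa using tendsto_const_nhds.add
        (tendsto_const_nhds.div_atTop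
          (tendsto_neg_atBot_atTop.const_mul_atTop (two_pos : (0 : ℝ) < 2)))
    refine ge_of_tendsto hlim ?_
    filter_upwards [eventually_lt_atBot (0 : ℝ)] with s hs
    have := horizontal x y hs
    linarith [vertical x hs (neg_one_lt_zero), vertical y (neg_one_lt_zero) hs]
  obtain ⟨c₀, -⟩ := hne
  refine ⟨F (fst2 c₀) (-1), fun q hq => ?_⟩
  have hq : F (fst2 q) (snd2 q) = F (fst2 q) (-1) :=
    le_antisymm (vertical _ neg_one_lt_zero hq) (vertical _ hq neg_one_lt_zero)
  exact hq.trans (le_antisymm (hle _ _) (hle _ _))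

lemma dist_mk2_add_le_of_dist_le {q c : WithLp 2 (X × ℝ)} {D η : ℝ} (hqc : snd2 q ≤ snd2 c)
    (h₁ : D ≤ dist q c) (h₂ : dist q c ≤ D + η) :
    dist (mk2 (fst2 q) (snd2 q + D)) c ≤ 2 * dist (fst2 q) (fst2 c) + η := by
  have hup : D ≤ dist (fst2 q) (fst2 c) + (snd2 c - snd2 q) := by
    have := dist_le_dist_fst2_add_abs_snd2 q c
    rw [abs_sub_comm, abs_of_nonneg (by linarith)] at this
    linarith
  have hlow : snd2 c - snd2 q ≤ D + η := by
    have := abs_snd2_sub_le_dist q c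
    rw [abs_sub_comm] at this
    linarith [le_abs_self (snd2 c - snd2 q)]
  calc dist (mk2 (fst2 q) (snd2 q + D)) c
      ≤ dist (fst2 q) (fst2 c) + |snd2 q + D - snd2 c| := dist_le_dist_fst2_add_abs_snd2 _ _
    _ ≤ 2 * dist (fst2 q) (fst2 c) + η := by
        have := dist_nonneg (x := fst2 q) (y := fst2 c)
        have : |snd2 q + D - snd2 c| ≤ dist (fst2 q) (fst2 c) + η :=
          abs_le.2 ⟨by linarith, by linarith⟩
        linarith

lemma infDist_sub_le_infDist_mk2_add (hne : C.Nonempty) {q : WithLp 2 (X × ℝ)} {δ η R t : ℝ}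
    (hδ : 0 < δ) (hR : infDist q C + η ≤ R)
    (hnear : ∀ c ∈ C, dist q c ≤ infDist q C + η → δ ≤ dist (fst2 q) (fst2 c))
    (ht : 0 ≤ t) (htη : δ ^ 2 / (2 * R ^ 2) * t ≤ η) :
    infDist q C - t + δ ^ 2 / (2 * R ^ 2) * t ≤ infDist (mk2 (fst2 q) (snd2 q + t)) C := by
  refine (le_infDist hne).2 fun c hc => ?_
  have hD := infDist_le_dist_of_mem (x := q) hc
  rcases le_or_gt (dist q c) (infDist q C + η) with hclose | hfar
  · have ha := hnear c hc hclose
    have hr : 0 < dist q c := hδ.trans_le (ha.trans (dist_fst2_le_dist q c))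
    have hsq := dist_sq_eq_fst2_snd2 q c
    have key := sqrt_sq_add_sq_sub_le (a := dist (fst2 q) (fst2 c)) (b := snd2 q - snd2 c) ht
      (hsq ▸ pow_pos hr 2)
    rw [← hsq, Real.sqrt_sq hr.le] at key
    rw [dist_eq_sqrt_fst2_snd2 (mk2 _ _), fst2_mk2, snd2_mk2, add_sub_right_comm]
    have : δ ^ 2 / (2 * R ^ 2) * t ≤ t * dist (fst2 q) (fst2 c) ^ 2 / (2 * dist q c ^ 2) := by
      rw [mul_div_assoc, mul_comm t]
      gcongr
      linarith
    linarith
  · have := dist_triangle_left q c (mk2 (fst2 q) (snd2 q + t))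
    rw [dist_mk2_add_self, abs_of_nonneg ht] at this
    linarith

lemma dist_mk2_add_infDist_le (q q' : WithLp 2 (X × ℝ)) :
    dist (mk2 (fst2 q) (snd2 q + infDist q C)) (mk2 (fst2 q') (snd2 q' + infDist q' C))
      ≤ 2 * dist q q' := by
  calc _ ≤ dist (mk2 (fst2 q) (snd2 q + infDist q C)) (mk2 (fst2 q') (snd2 q' + infDist q C))
          + dist (mk2 (fst2 q') (snd2 q' + infDist q C))
              (mk2 (fst2 q') (snd2 q' + infDist q' C)) := dist_triangle _ _ _
    _ = dist q q' + |infDist q C - infDist q' C| := by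
        rw [dist_mk2_add_mk2_add, dist_mk2_mk2_same_fst, add_sub_add_left_eq_sub]
        rfl
    _ ≤ 2 * dist q q' := by
        have h₁ := infDist_le_infDist_add_dist (x := q) (y := q') (s := C)
        have h₂ := infDist_le_infDist_add_dist (x := q') (y := q) (s := C)
        rw [dist_comm] at h₂
        have : |infDist q C - infDist q' C| ≤ dist q q' :=
          abs_sub_le_iff.2 ⟨by linarith, by linarith⟩
        linarith

end DistanceToSet

lemma ofReal_le_lipConst_of_frequently {Y : Type*} [MetricSpace Y] {f : Y → ℝ} {x : Y}
    {τ : ℝ} (h : ∃ᶠ y in 𝓝[≠] x, τ * dist x y ≤ |f x - f y|) :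
    ENNReal.ofReal τ ≤ lipConst f x := by
  refine le_limsup_of_frequently_le' ((h.and_eventually self_mem_nhdsWithin).mono ?_)
  rintro y ⟨hy, hyx⟩
  exact ENNReal.ofReal_le_ofReal ((le_div_iff₀ (dist_pos.2 (Ne.symm hyx))).2 hy)

section Slope

variable {X : Type*} [MetricSpace X] {C : Set (WithLp 2 (X × ℝ))}

lemma ball_subset_setOf_snd2_neg (q : WithLp 2 (X × ℝ)) :
    ball q (-snd2 q) ⊆ {q' | snd2 q' < 0} := fun q' hq' => by
  have := (le_abs_self _).trans_lt ((abs_snd2_sub_le_dist q' q).trans_lt (mem_ball.1 hq'))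
  show snd2 q' < 0
  linarith

lemma tendsto_mk2_add_nhdsGT (q : WithLp 2 (X × ℝ)) :
    Tendsto (fun t => mk2 (fst2 q) (snd2 q + t)) (𝓝[>] 0) (𝓝[≠] q) := by
  refine tendsto_nhdsWithin_iff.2 ⟨tendsto_iff_dist_tendsto_zero.2 ?_, ?_⟩
  · simp only [dist_mk2_add_self]
    exact (continuous_abs.tendsto' 0 0 abs_zero).mono_left nhdsWithin_le_nhds
  · filter_upwards [self_mem_nhdsWithin] with t (ht : 0 < t) hq
    have := congrArg snd2 hq
    simp only [snd2_mk2] at this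
    linarith

lemma ofReal_le_lipConst_of_le_mk2_add {f : WithLp 2 (X × ℝ) → ℝ} {q : WithLp 2 (X × ℝ)}
    {τ T : ℝ} (hT : 0 < T)
    (h : ∀ t ∈ Ioo 0 T, f q + τ * t ≤ f (mk2 (fst2 q) (snd2 q + t))) :
    ENNReal.ofReal τ ≤ lipConst f q := by
  refine ofReal_le_lipConst_of_frequently ((tendsto_mk2_add_nhdsGT q).frequently ?_)
  refine Eventually.frequently ?_
  filter_upwards [Ioo_mem_nhdsGT hT] with t ht
  rw [dist_comm, dist_mk2_add_self, abs_of_pos ht.1, abs_sub_comm]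
  exact le_trans (by linarith [h t ht]) (le_abs_self _)

lemma ofReal_le_lipConst_infDist_add_snd2 (hne : C.Nonempty) (hsub : C ⊆ {q | 0 ≤ snd2 q})
    {q : WithLp 2 (X × ℝ)} {κ R : ℝ} (hq : snd2 q < 0) (hκ : 0 < κ)
    (hfoot : 3 * κ ≤ infDist (mk2 (fst2 q) (snd2 q + infDist q C)) C)
    (hR : infDist q C + κ ≤ R) :
    ENNReal.ofReal (κ ^ 2 / (2 * R ^ 2)) ≤ lipConst (fun q' => infDist q' C + snd2 q') q := by
  have hnear : ∀ c ∈ C, dist q c ≤ infDist q C + κ → κ ≤ dist (fst2 q) (fst2 c) := by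
    intro c hc hqc
    have := dist_mk2_add_le_of_dist_le (hq.le.trans (hsub hc)) (infDist_le_dist_of_mem hc) hqc
    linarith [hfoot.trans (infDist_le_dist_of_mem hc)]
  have hτ : 0 < κ ^ 2 / (2 * R ^ 2) := by
    have : 0 < R := by linarith [infDist_nonneg (x := q) (s := C)]
    positivity
  refine ofReal_le_lipConst_of_le_mk2_add (div_pos hκ hτ) fun t ht => ?_
  have := infDist_sub_le_infDist_mk2_add hne hκ hR hnear ht.1.le ((lt_div_iff₀' hτ).1 ht.2).le
  simp only [snd2_mk2]
  linarith

end Slope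

theorem gradientLowerBound_general {X : Type*} [MetricSpace X] [MeasurableSpace X] [BorelSpace X]
    [SecondCountableTopology X]
    (μ : Measure X)
    (C : Set (WithLp 2 (X × ℝ))) (hne : C.Nonempty)
    (hsub : C ⊆ {q | 0 < snd2 q})
    (hnc : ¬ ∃ c : ℝ, ∀ q : WithLp 2 (X × ℝ), snd2 q < 0 →
      Metric.infDist q C + snd2 q = c) :
    ∃ xb : WithLp 2 (X × ℝ), ∃ ρ τ : ℝ, 0 < ρ ∧ 0 < τ ∧
      Metric.ball xb ρ ⊆ {q | snd2 q < 0} ∧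
      ∀ᵐ q ∂((l2prodMeasure μ volume).restrict (Metric.ball xb ρ)),
        ENNReal.ofReal τ ≤ lipConst (fun q' => Metric.infDist q' C + snd2 q') q := by
  have hsub' : C ⊆ {q | 0 ≤ snd2 q} := fun c hc => (show 0 < snd2 c from hsub hc).le
  by_cases hV : ∀ q, snd2 q < 0 → mk2 (fst2 q) (snd2 q + infDist q C) ∈ closure C
  · exact absurd (exists_infDist_add_snd2_eq_of_forall_mem_closure hne hsub' hV) hnc
  push Not at hV
  obtain ⟨qb, hqb, hfoot⟩ := hV
  set κ := infDist (mk2 (fst2 qb) (snd2 qb + infDist qb C)) C / 5 with hκ_def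
  have hκ : 0 < κ := div_pos ((infDist_pos_iff_notMem_closure hne).1 hfoot) (by norm_num)
  have hR : 0 < infDist qb C + 2 * κ := by linarith [infDist_nonneg (x := qb) (s := C)]
  have hball : ball qb (min κ (-snd2 qb)) ⊆ {q | snd2 q < 0} :=
    (ball_subset_ball (min_le_right _ _)).trans (ball_subset_setOf_snd2_neg qb)
  refine ⟨qb, min κ (-snd2 qb), κ ^ 2 / (2 * (infDist qb C + 2 * κ) ^ 2),
    lt_min hκ (neg_pos.2 hqb), by positivity, hball,
    (ae_restrict_iff' measurableSet_ball).2 (ae_of_all _ fun q hq => ?_)⟩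
  have hqqb : dist q qb < κ := (mem_ball.1 hq).trans_le (min_le_left _ _)
  refine ofReal_le_lipConst_infDist_add_snd2 hne hsub' (hball hq) hκ ?_ ?_
  -- the height of the vertical foot above `C` is a 2-Lipschitz function of the base point
  · have := infDist_le_infDist_add_dist (s := C) (x := mk2 (fst2 qb) (snd2 qb + infDist qb C))
      (y := mk2 (fst2 q) (snd2 q + infDist q C))
    linarith [dist_mk2_add_infDist_le (C := C) qb q, dist_comm q qb, hκ_def]
  · linarith [infDist_le_infDist_add_dist (x := q) (y := qb) (s := C)]

/-- **Gradient lower bound for a non-constant `d̄`.** Let `(X,d,m)` be a parabolic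
`RCD(0,N)` space, `C ⊆ X × (0,∞)` nonempty and locally the boundary of a locally
perimeter minimizing set, and `d̄ := d_C - d_0` on `X × (-∞,0)` (where `d_0` is the
signed distance from `X × {0}`, positive on the lower half-space, so that
`d̄(x,s) = d_C(x,s) + s` for `s < 0`). If `d̄` is not constant, then there are a
ball `B ⊆ X × (-∞,0)` and `τ > 0` with `|∇ d̄| ≥ τ` a.e. on `B`. -/
theorem gradientLowerBound {X : Type*} [MetricSpace X] [MeasurableSpace X] [BorelSpace X]
    [SecondCountableTopology X]
    (μ : Measure X) (N : ℝ) (hRCD : IsRCD 0 N μ)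
    (p : ℝ → X → X → ℝ) (hp : IsHeatKernel μ p) (hpar : Parabolic μ p)
    (C : Set (WithLp 2 (X × ℝ))) (hne : C.Nonempty)
    (hsub : C ⊆ {q | 0 < snd2 q})
    (hC : IsLocalMinimizingBoundary (l2prodMeasure μ volume) C)
    (hnc : ¬ ∃ c : ℝ, ∀ q : WithLp 2 (X × ℝ), snd2 q < 0 →
      Metric.infDist q C + snd2 q = c) :
    ∃ xb : WithLp 2 (X × ℝ), ∃ ρ τ : ℝ, 0 < ρ ∧ 0 < τ ∧
      Metric.ball xb ρ ⊆ {q | snd2 q < 0} ∧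
      ∀ᵐ q ∂((l2prodMeasure μ volume).restrict (Metric.ball xb ρ)),
        ENNReal.ofReal τ ≤ lipConst (fun q' => Metric.infDist q' C + snd2 q') q :=
  gradientLowerBound_general μ C hne hsub hnc

end HalfSpaceRCD
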